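/- arXiv:1709.04104 — 2 statements merged into one kernel-verified Lean document; each statement's English description precedes it below -/
import Mathlib

section
/- Let b, c ∈ ℝ with b > -1 and c > -1. Then the sequence of partial products P_N = ∏_{n=1}^{N} ((n+b)/(n+c))^{u_n} converges as N → ∞ to a positive real limit. -/
open Filter Finset Topology

/-!
Taking logarithms, the product is the exponential of the partial sums of
`a n = u n * log ((n + b) / (n + c))`. Since `u (2k) = u k` and `u (2k+1) = -u k`, the pair
`a (2k) + a (2k+1)` is `u k` times the difference of two consecutive logarithms, which is
`O(|b - c| / k²)`. So the paired series converges absolutely, and as `a n → 0` the partial sums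
themselves converge.
-/

/-- The Thue–Morse sequence with values `±1`: `u n = (-1)^(s₂ n)` where `s₂ n`
is the sum of the binary digits of `n`. -/
def u (n : ℕ) : ℤ := (-1) ^ (Nat.digits 2 n).sum

section PairedSums

theorem tendsto_of_tendsto_even_of_tendsto_odd {α : Type*} {s : ℕ → α} {l : Filter α}
    (he : Tendsto (fun k => s (2 * k)) atTop l) (ho : Tendsto (fun k => s (2 * k + 1)) atTop l) :
    Tendsto s atTop l := by
  intro U hU
  obtain ⟨K₁, hK₁⟩ := eventually_atTop.1 (he hU)
  obtain ⟨K₂, hK₂⟩ := eventually_atTop.1 (ho hU)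
  refine eventually_atTop.2 ⟨2 * (K₁ + K₂), fun n hn => ?_⟩
  obtain ⟨k, rfl | rfl⟩ := Nat.even_or_odd' n
  · exact hK₁ k (by omega)
  · exact hK₂ k (by omega)

variable {G : Type*} [AddCommGroup G]

theorem Finset.sum_range_two_mul (a : ℕ → G) (k : ℕ) :
    ∑ n ∈ range (2 * k), a n = ∑ i ∈ range k, (a (2 * i) + a (2 * i + 1)) := by
  induction k with
  | zero => simp
  | succ k ih => rw [mul_add, mul_one, sum_range_succ, sum_range_succ, sum_range_succ, ih,
      add_assoc]

variable [TopologicalSpace G] [IsTopologicalAddGroup G]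

theorem tendsto_sum_range_of_hasSum_pairs {a : ℕ → G} {s : G} (ha : Tendsto a atTop (𝓝 0))
    (hs : HasSum (fun k => a (2 * k) + a (2 * k + 1)) s) :
    Tendsto (fun N => ∑ n ∈ range N, a n) atTop (𝓝 s) := by
  have h_even : Tendsto (fun k => ∑ n ∈ range (2 * k), a n) atTop (𝓝 s) := by
    simpa only [sum_range_two_mul] using hs.tendsto_sum_nat
  refine tendsto_of_tendsto_even_of_tendsto_odd h_even ?_
  have h_two_mul : Tendsto (fun k : ℕ => 2 * k) atTop atTop :=
    tendsto_id.const_mul_atTop' two_pos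
  simpa only [sum_range_succ, add_zero, Function.comp_def] using
    h_even.add (ha.comp h_two_mul)

end PairedSums

theorem u_two_mul (k : ℕ) : u (2 * k) = u k := by
  rcases Nat.eq_zero_or_pos k with rfl | hk
  · rfl
  · rw [u, Nat.digits_def' (by norm_num) (by omega)]
    simp [u]

theorem u_two_mul_add_one (k : ℕ) : u (2 * k + 1) = -u k := by
  rw [u, Nat.digits_def' (by norm_num) (by omega)]
  simp [u, pow_add, Nat.mul_add_div]

theorem abs_u (n : ℕ) : |(u n : ℝ)| = 1 := by
  simp [u]

theorem Real.abs_log_sub_log_le {p q m : ℝ} (hm : 0 < m) (hp : m ≤ p) (hq : m ≤ q) :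
    |Real.log p - Real.log q| ≤ |p - q| / m := by
  have key : ∀ {x y : ℝ}, m ≤ x → m ≤ y → Real.log x - Real.log y ≤ |x - y| / m := by
    intro x y hx hy
    have hy₀ : 0 < y := hm.trans_le hy
    calc Real.log x - Real.log y = Real.log (x / y) := (Real.log_div (by linarith) hy₀.ne').symm
      _ ≤ x / y - 1 := Real.log_le_sub_one_of_pos (div_pos (by linarith) hy₀)
      _ = (x - y) / y := by field_simp
      _ ≤ |x - y| / y := by gcongr; exact le_abs_self _
      _ ≤ |x - y| / m := by gcongr
  exact abs_sub_le_iff.2 ⟨key hp hq, abs_sub_comm p q ▸ key hq hp⟩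

noncomputable def logFactor (b c : ℝ) (n : ℕ) : ℝ := Real.log ((n + b) / (n + c))

theorem tendsto_logFactor (b c : ℝ) : Tendsto (logFactor b c) atTop (𝓝 0) := by
  have h_ratio : Tendsto (fun n : ℕ => ((n : ℝ) + b) / (n + c)) atTop (𝓝 1) := by
    have h_const : Tendsto (fun n : ℕ => b / ((n : ℝ) + c)) atTop (𝓝 0) :=
      tendsto_const_nhds.div_atTop (tendsto_atTop_add_const_right _ c tendsto_natCast_atTop_atTop)
    simpa only [add_div, add_zero] using (tendsto_natCast_div_add_atTop c).add h_const
  have h_log := (Real.continuousAt_log one_ne_zero).tendsto.comp h_ratio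
  rw [Real.log_one] at h_log
  exact h_log

theorem abs_logFactor_two_mul_sub_le {b c : ℝ} (hb : -1 < b) (hc : -1 < c) {k : ℕ}
    (hk : 1 ≤ k) :
    |logFactor b c (2 * k) - logFactor b c (2 * k + 1)| ≤ |b - c| / k ^ 2 := by
  have hk' : (1 : ℝ) ≤ k := by exact_mod_cast hk
  set x : ℝ := 2 * k with hx
  have hxb : 0 < x + b := by linarith
  have hxc : 0 < x + c := by linarith
  have hxb₁ : 0 < x + 1 + b := by linarith
  have hxc₁ : 0 < x + 1 + c := by linarith
  have h_log : logFactor b c (2 * k) - logFactor b c (2 * k + 1) =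
      Real.log ((x + b) * (x + 1 + c)) - Real.log ((x + 1 + b) * (x + c)) := by
    simp only [logFactor, Nat.cast_add, Nat.cast_mul, Nat.cast_ofNat, Nat.cast_one, ← hx]
    rw [Real.log_div hxb.ne' hxc.ne', Real.log_div hxb₁.ne' hxc₁.ne',
      Real.log_mul hxb.ne' hxc₁.ne', Real.log_mul hxb₁.ne' hxc.ne']
    ring
  rw [h_log]
  calc _ ≤ |(x + b) * (x + 1 + c) - (x + 1 + b) * (x + c)| / k ^ 2 :=
        Real.abs_log_sub_log_le (by positivity) (by nlinarith) (by nlinarith)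
    _ = |b - c| / k ^ 2 := by ring_nf

theorem summable_logFactor_mul_u_pairs {b c : ℝ} (hb : -1 < b) (hc : -1 < c) :
    Summable fun k : ℕ =>
      logFactor b c (2 * k) * u (2 * k) + logFactor b c (2 * k + 1) * u (2 * k + 1) := by
  refine Summable.of_norm_bounded_eventually_nat
    ((Real.summable_one_div_nat_pow.2 one_lt_two).mul_left |b - c|) ?_
  filter_upwards [eventually_ge_atTop 1] with k hk
  have h_pair : logFactor b c (2 * k) * u (2 * k) + logFactor b c (2 * k + 1) * u (2 * k + 1) =
      u k * (logFactor b c (2 * k) - logFactor b c (2 * k + 1)) := by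
    rw [u_two_mul, u_two_mul_add_one]
    push_cast
    ring
  rw [h_pair, Real.norm_eq_abs, abs_mul, abs_u, one_mul, mul_one_div]
  exact abs_logFactor_two_mul_sub_le hb hc hk

theorem tendsto_sum_logFactor_mul_u {b c : ℝ} (hb : -1 < b) (hc : -1 < c) :
    ∃ s, Tendsto (fun N => ∑ n ∈ Icc 1 N, logFactor b c n * u n) atTop (𝓝 s) := by
  set a : ℕ → ℝ := fun n => logFactor b c n * u n
  have ha : Tendsto a atTop (𝓝 0) :=
    (tendsto_logFactor b c).zero_mul_isBoundedUnder_le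
      (isBoundedUnder_of ⟨1, fun n => (abs_u n).le⟩)
  obtain ⟨s, hs⟩ := summable_logFactor_mul_u_pairs hb hc
  have h_range := (tendsto_add_atTop_iff_nat 1).2 (tendsto_sum_range_of_hasSum_pairs ha hs)
  refine ⟨s - a 0, (h_range.sub_const (a 0)).congr fun N => ?_⟩
  rw [sum_range_eq_add_Ico _ (Nat.succ_pos N), Nat.succ_eq_add_one, Ico_add_one_right_eq_Icc,
    add_sub_cancel_left]

theorem prod_Icc_pow_u_eq_exp {b c : ℝ} (hb : -1 < b) (hc : -1 < c) (N : ℕ) :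
    ∏ n ∈ Icc 1 N, (((n : ℝ) + b) / (n + c)) ^ u n =
      Real.exp (∑ n ∈ Icc 1 N, logFactor b c n * u n) := by
  rw [Real.exp_sum]
  refine prod_congr rfl fun n hn => ?_
  have hn' : (1 : ℝ) ≤ n := by exact_mod_cast (mem_Icc.1 hn).1
  rw [logFactor, ← Real.rpow_def_of_pos (div_pos (by linarith) (by linarith)), Real.rpow_intCast]

/-- For `b, c > -1`, the partial products `∏_{n=1}^{N} ((n+b)/(n+c))^{u_n}`
converge to a positive real limit. -/
theorem stmt_0 (b c : ℝ) (hb : -1 < b) (hc : -1 < c) :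
    ∃ L : ℝ, 0 < L ∧
      Tendsto (fun N : ℕ => ∏ n ∈ Finset.Icc 1 N,
        (((n : ℝ) + b) / ((n : ℝ) + c)) ^ (u n)) atTop (𝓝 L) := by
  obtain ⟨s, hs⟩ := tendsto_sum_logFactor_mul_u hb hc
  refine ⟨Real.exp s, Real.exp_pos s, ?_⟩
  simpa only [prod_Icc_pow_u_eq_exp hb hc, Function.comp_def] using
    (Real.continuous_exp.tendsto s).comp hs
end

section
/- The partial products ∏_{n=0}^{N} [((4n+3)(2n+2)) / ((4n+5)(2n+3))]^{u_n} converge as N → ∞ to 1/√2, and the partial products ∏_{n=0}^{N} [((2n+2)(n+1)) / ((2n+3)(n+2))]^{u_n} also converge as N → ∞ to 1/√2. -/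
open Filter Finset Topology

def thueMorsePartialSum (g : ℕ → ℝ) (N : ℕ) : ℝ := ∑ n ∈ range N, u n * g n

def HasThueMorseSum (g : ℕ → ℝ) (L : ℝ) : Prop :=
  Tendsto (thueMorsePartialSum g) atTop (𝓝 L)

def pairDiff (g : ℕ → ℝ) (k : ℕ) : ℝ := g (2 * k) - g (2 * k + 1)

theorem thueMorsePartialSum_two_mul (g : ℕ → ℝ) (M : ℕ) :
    thueMorsePartialSum g (2 * M) = thueMorsePartialSum (pairDiff g) M := by
  induction M with
  | zero => simp [thueMorsePartialSum]
  | succ M ih =>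
    rw [show 2 * (M + 1) = 2 * M + 1 + 1 by ring, thueMorsePartialSum, sum_range_succ,
      sum_range_succ, ← thueMorsePartialSum, ih, thueMorsePartialSum, thueMorsePartialSum,
      sum_range_succ, u_two_mul, u_two_mul_add_one, pairDiff]
    push_cast
    ring

theorem tendsto_of_tendsto_two_mul_of_tendsto_two_mul_add_one {α : Type*} {f : ℕ → α}
    {l : Filter α} (h₀ : Tendsto (fun k => f (2 * k)) atTop l)
    (h₁ : Tendsto (fun k => f (2 * k + 1)) atTop l) : Tendsto f atTop l := by
  intro s hs
  obtain ⟨K, hK⟩ := eventually_atTop.1 ((h₀.eventually_mem hs).and (h₁.eventually_mem hs))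
  refine mem_atTop_sets.2 ⟨2 * K, fun N hN => ?_⟩
  obtain ⟨k, rfl | rfl⟩ := Nat.even_or_odd' N
  exacts [(hK k (by omega)).1, (hK k (by omega)).2]

section HasThueMorseSum

variable {f g : ℕ → ℝ} {K L : ℝ}

theorem HasThueMorseSum.add (hf : HasThueMorseSum f K) (hg : HasThueMorseSum g L) :
    HasThueMorseSum (f + g) (K + L) :=
  (Tendsto.add hf hg).congr fun N => by simp [thueMorsePartialSum, mul_add, sum_add_distrib]

theorem HasThueMorseSum.sub (hf : HasThueMorseSum f K) (hg : HasThueMorseSum g L) :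
    HasThueMorseSum (f - g) (K - L) :=
  (Tendsto.sub hf hg).congr fun N => by simp [thueMorsePartialSum, mul_sub, sum_sub_distrib]

theorem HasThueMorseSum.const_mul (c : ℝ) (hg : HasThueMorseSum g L) :
    HasThueMorseSum (fun n => c * g n) (c * L) :=
  (Tendsto.const_mul c hg).congr fun N => by
    simp [thueMorsePartialSum, mul_sum, mul_left_comm]

theorem HasThueMorseSum.pairDiff (hg : HasThueMorseSum g L) : HasThueMorseSum (pairDiff g) L :=
  (hg.comp (tendsto_id.const_mul_atTop' two_pos)).congr (thueMorsePartialSum_two_mul g)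

theorem hasThueMorseSum_single_zero (a : ℝ) : HasThueMorseSum (Pi.single 0 a) a := by
  refine tendsto_const_nhds.congr' ?_
  filter_upwards [eventually_ge_atTop 1] with N hN
  rw [thueMorsePartialSum, sum_eq_single 0 (fun n _ hn => by simp [hn]) (by simp; omega)]
  simp [u]

theorem exists_hasThueMorseSum (hg : Tendsto g atTop (𝓝 0))
    (hs : Summable fun k => |pairDiff g k|) : ∃ L, HasThueMorseSum g L := by
  have hsum : Summable fun k => (u k : ℝ) * pairDiff g k :=
    .of_abs (hs.congr fun k => by rw [abs_mul, abs_u, one_mul])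
  have heven : Tendsto (fun M => thueMorsePartialSum g (2 * M)) atTop
      (𝓝 (∑' k, u k * pairDiff g k)) :=
    hsum.hasSum.tendsto_sum_nat.congr fun M => (thueMorsePartialSum_two_mul g M).symm
  have hlast : Tendsto (fun M => (u (2 * M) : ℝ) * g (2 * M)) atTop (𝓝 0) := by
    rw [tendsto_zero_iff_norm_tendsto_zero]
    simpa [abs_mul, abs_u] using (hg.comp (tendsto_id.const_mul_atTop' two_pos)).norm
  refine ⟨_, tendsto_of_tendsto_two_mul_of_tendsto_two_mul_add_one heven ?_⟩
  simpa [thueMorsePartialSum, sum_range_succ] using heven.add hlast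

theorem HasThueMorseSum.tendsto_prod_zpow {a : ℕ → ℝ} (ha : ∀ n, 0 < a n)
    (h : HasThueMorseSum (fun n => Real.log (a n)) L) :
    Tendsto (fun N => ∏ n ∈ range (N + 1), a n ^ u n) atTop (𝓝 (Real.exp L)) := by
  refine ((Real.continuous_exp.tendsto L).comp (h.comp (tendsto_add_atTop_nat 1))).congr
    fun N => ?_
  simp only [Function.comp_apply, thueMorsePartialSum, Real.exp_sum]
  refine prod_congr rfl fun n _ => ?_
  rw [← Real.log_zpow, Real.exp_log (zpow_pos (ha n) _)]

end HasThueMorseSum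

noncomputable def logRatio (x : ℝ) : ℝ := Real.log x - Real.log (x + 1)

theorem logRatio_two_mul_add_logRatio {x : ℝ} (hx : 0 < x) :
    logRatio (2 * x) + logRatio (2 * x + 1) = logRatio x := by
  simp only [logRatio]
  rw [show 2 * x + 1 + 1 = 2 * (x + 1) by ring, Real.log_mul two_ne_zero hx.ne',
    Real.log_mul two_ne_zero (by positivity)]
  ring

theorem abs_logRatio_sub_logRatio_le {x : ℝ} (hx : 0 < x) :
    |logRatio x - logRatio (x + 1)| ≤ 1 / x ^ 2 := by
  set r := x * (x + 2) / (x + 1) ^ 2 with hr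
  have hr0 : 0 < r := by positivity
  have hr1 : r ≤ 1 := by rw [hr, div_le_one (by positivity)]; nlinarith
  have hlog : logRatio x - logRatio (x + 1) = Real.log r := by
    rw [hr, Real.log_div (by positivity) (by positivity), Real.log_mul hx.ne' (by positivity),
      Real.log_pow, logRatio, logRatio]
    ring_nf
  rw [hlog, abs_of_nonpos (Real.log_nonpos hr0.le hr1), ← Real.log_inv]
  calc Real.log r⁻¹ ≤ r⁻¹ - 1 := Real.log_le_sub_one_of_pos (inv_pos.2 hr0)
    _ = 1 / (x * (x + 2)) := by
      rw [hr, inv_div, div_sub_one (by positivity)]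
      ring
    _ ≤ 1 / x ^ 2 := one_div_le_one_div_of_le (by positivity) (by nlinarith)

theorem summable_abs_logRatio_sub :
    Summable fun m : ℕ => |logRatio m - logRatio (m + 1)| :=
  (summable_nat_add_iff 1).1 <| .of_nonneg_of_le (fun _ => abs_nonneg _)
    (fun m => abs_logRatio_sub_logRatio_le (Nat.cast_pos.2 m.succ_pos))
    ((summable_nat_add_iff 1).2 (Real.summable_one_div_nat_pow.2 one_lt_two))

theorem tendsto_logRatio_natCast : Tendsto (fun n : ℕ => logRatio n) atTop (𝓝 0) := by
  have h := (Real.continuousAt_log one_ne_zero).tendsto.comp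
    (tendsto_natCast_div_add_atTop (1 : ℝ))
  rw [Real.log_one] at h
  refine h.congr' ?_
  filter_upwards [eventually_ge_atTop 1] with n hn
  rw [Function.comp_apply, logRatio, Real.log_div (by positivity) (by positivity)]

theorem hasThueMorseSum_logRatio_two_mul_add_one :
    HasThueMorseSum (fun n => logRatio (2 * n + 1)) (-(Real.log 2 / 2)) := by
  -- `logRatio 0 = 0` (as `Real.log 0 = 0`), so `γ` is `∑_{n ≥ 1} uₙ ψ(n)`; the pair `k = 0`
  -- is where the extra `log 2` comes from.
  obtain ⟨γ, hγ⟩ := exists_hasThueMorseSum tendsto_logRatio_natCast <|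
    (summable_abs_logRatio_sub.comp_injective (mul_right_injective₀ two_ne_zero)).congr
      fun k => by simp [pairDiff]
  have hpair (n : ℕ) : logRatio n - pairDiff (fun m : ℕ => logRatio m) n
      - Pi.single (M := fun _ => ℝ) 0 (Real.log 2) n = 2 * logRatio (2 * n + 1) := by
    rcases Nat.eq_zero_or_pos n with rfl | hn
    · simp [pairDiff, logRatio, one_add_one_eq_two]
      ring
    · have := logRatio_two_mul_add_logRatio (Nat.cast_pos.2 hn)
      simp [pairDiff, hn.ne']
      linarith
  convert ((hγ.sub hγ.pairDiff).sub (hasThueMorseSum_single_zero (Real.log 2))).const_mul (1 / 2)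
    using 1
  · funext n
    rw [Pi.sub_apply, Pi.sub_apply, hpair]
    ring
  · ring

theorem exists_hasThueMorseSum_logRatio_add_one :
    ∃ ℓ, HasThueMorseSum (fun n => logRatio (n + 1)) ℓ := by
  refine exists_hasThueMorseSum ?_ <|
    (summable_abs_logRatio_sub.comp_injective
      ((add_left_injective 1).comp (mul_right_injective₀ two_ne_zero))).congr
      fun k => by simp [pairDiff]
  simpa [Function.comp_def] using tendsto_logRatio_natCast.comp (tendsto_add_atTop_nat 1)

theorem log_factor₁_eq_logRatio {x : ℝ} (hx : 0 ≤ x) :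
    Real.log ((4 * x + 3) * (2 * x + 2) / ((4 * x + 5) * (2 * x + 3))) =
      logRatio (2 * x + 1) + logRatio (2 * x + 2) -
        (logRatio (4 * x + 2) - logRatio (4 * x + 4)) := by
  have h := logRatio_two_mul_add_logRatio (x := 2 * x + 1) (by positivity)
  rw [Real.log_div (by positivity) (by positivity), Real.log_mul (by positivity) (by positivity),
    Real.log_mul (by positivity) (by positivity)]
  simp only [logRatio] at h ⊢
  ring_nf at h ⊢
  linarith

theorem log_factor₂_eq_logRatio {x : ℝ} (hx : 0 ≤ x) :
    Real.log ((2 * x + 2) * (x + 1) / ((2 * x + 3) * (x + 2))) =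
      logRatio (2 * x + 2) + logRatio (x + 1) := by
  rw [Real.log_div (by positivity) (by positivity), Real.log_mul (by positivity) (by positivity),
    Real.log_mul (by positivity) (by positivity)]
  simp only [logRatio]
  ring_nf

theorem Real.exp_neg_log_two_div_two : Real.exp (-(Real.log 2 / 2)) = 1 / √2 := by
  rw [Real.exp_neg, ← Real.log_sqrt zero_le_two, Real.exp_log (by positivity), one_div]

/-- The partial products `∏_{n=0}^{N} [((4n+3)(2n+2)) / ((4n+5)(2n+3))]^{u_n}`
and `∏_{n=0}^{N} [((2n+2)(n+1)) / ((2n+3)(n+2))]^{u_n}` both converge to `1/√2`. -/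
theorem stmt_19 :
    Tendsto (fun N : ℕ => ∏ n ∈ Finset.range (N + 1),
      (((4 * (n : ℝ) + 3) * (2 * (n : ℝ) + 2)) /
        ((4 * (n : ℝ) + 5) * (2 * (n : ℝ) + 3))) ^ (u n)) atTop
      (𝓝 (1 / Real.sqrt 2)) ∧
    Tendsto (fun N : ℕ => ∏ n ∈ Finset.range (N + 1),
      (((2 * (n : ℝ) + 2) * ((n : ℝ) + 1)) /
        ((2 * (n : ℝ) + 3) * ((n : ℝ) + 2))) ^ (u n)) atTop
      (𝓝 (1 / Real.sqrt 2)) := by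
  have hw := hasThueMorseSum_logRatio_two_mul_add_one
  obtain ⟨ℓ, he⟩ := exists_hasThueMorseSum_logRatio_add_one
  have hd : HasThueMorseSum (fun n => logRatio (2 * n + 2)) (-(Real.log 2 / 2) - ℓ) := by
    convert hw.sub he.pairDiff using 1
    funext n
    simp only [pairDiff, Pi.sub_apply]
    push_cast
    ring_nf
  rw [← Real.exp_neg_log_two_div_two]
  constructor
  · refine HasThueMorseSum.tendsto_prod_zpow (fun n => by positivity) ?_
    convert (hw.add hd).sub hd.pairDiff using 1
    · funext n
      rw [log_factor₁_eq_logRatio n.cast_nonneg]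
      simp only [pairDiff, Pi.sub_apply, Pi.add_apply]
      push_cast
      ring_nf
    · ring
  · refine HasThueMorseSum.tendsto_prod_zpow (fun n => by positivity) ?_
    convert hd.add he using 1
    · exact funext fun n => log_factor₂_eq_logRatio n.cast_nonneg
    · ring
end
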